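/- Let d, w₁, w₂, w₃ be odd positive integers, χ : ℤ → ℂ d-periodic, ξ ∈ ℂ with appropriate nonvanishing conditions. Then for all n ≥ 0 and y₁, y₂, y₃ ∈ ℂ, the quantity ∑_{k+l+m=n} (n!/(k!l!m!)) T_k(w₁d−1;χ,ξ^{w₂w₃}) T_l(w₂d−1;χ,ξ^{w₁w₃}) T_m(w₃d−1;χ,ξ^{w₁w₂}) w₁^{l+m} w₂^{k+m} w₃^{k+l} is totally symmetric in (w₁,w₂,w₃), i.e. unchanged by every permutation of the three indices. -/

import Mathlib

open Finset PowerSeries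

/-- Generating function of the generalized twisted Euler polynomials:
`2 e^{xt} (ξ^d e^{dt}+1)⁻¹ ∑_{a=0}^{d-1} (-1)^a χ(a) ξ^a e^{at}` in `ℂ[[t]]`. -/
noncomputable def Egf (d : ℕ) (χ : ℤ → ℂ) (ξ x : ℂ) : PowerSeries ℂ :=
  2 * rescale x (exp ℂ) * (ξ ^ d • rescale (d : ℂ) (exp ℂ) + 1)⁻¹ *
    ∑ a ∈ Finset.range d, ((-1 : ℂ) ^ a * χ a * ξ ^ a) • rescale (a : ℂ) (exp ℂ)

/-- The generalized twisted Euler polynomial `E_{n,χ,ξ}(x)`. -/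
noncomputable def E (d : ℕ) (χ : ℤ → ℂ) (ξ x : ℂ) (n : ℕ) : ℂ :=
  (n.factorial : ℂ) * PowerSeries.coeff n (Egf d χ ξ x)

/-- The alternating generalized twisted power sum `T_k(m; χ, ξ)`. -/
noncomputable def T (m : ℕ) (χ : ℤ → ℂ) (ξ : ℂ) (k : ℕ) : ℂ :=
  ∑ a ∈ Finset.range (m + 1), (-1 : ℂ) ^ a * χ a * ξ ^ a * (a : ℂ) ^ k


/-- The triple sum of type Λ₂₃³, as a function of `(w₁, w₂, w₃)`. -/
noncomputable def S (d : ℕ) (χ : ℤ → ℂ) (ξ : ℂ) (n : ℕ) (u v w : ℕ) : ℂ :=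
  ∑ k ∈ Finset.range (n + 1), ∑ l ∈ Finset.range (n + 1 - k),
    (n.factorial : ℂ) / ((k.factorial : ℂ) * (l.factorial : ℂ) * ((n - k - l).factorial : ℂ)) *
      T (u * d - 1) χ (ξ ^ (v * w)) k *
      T (v * d - 1) χ (ξ ^ (u * w)) l *
      T (w * d - 1) χ (ξ ^ (u * v)) (n - k - l) *
      (u : ℂ) ^ (l + (n - k - l)) * (v : ℂ) ^ (k + (n - k - l)) * (w : ℂ) ^ (k + l)

/-!
`S d χ ξ n w₁ w₂ w₃ / n!` is the `n`-th coefficient of the product of the three exponential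
generating functions `∑ₖ T_k(wᵢd - 1; χ, ξ^{mᵢ}) (mᵢt)ᵏ / k!`, where `mᵢ = w₁w₂w₃ / wᵢ`. Each
factor depends only on `wᵢ` and `mᵢ`, so the product is symmetric in `(w₁, w₂, w₃)`; invariance
under the two adjacent transpositions gives invariance under all of `S₃`.
-/

theorem coeff_mul_mul_eq_sum_range {R : Type*} [CommSemiring R] (f g h : R⟦X⟧) (n : ℕ) :
    coeff n (f * (g * h)) = ∑ k ∈ range (n + 1), ∑ l ∈ range (n + 1 - k),
      coeff k f * coeff l g * coeff (n - k - l) h := by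
  rw [coeff_mul, Nat.sum_antidiagonal_eq_sum_range_succ_mk]
  refine sum_congr rfl fun k hk => ?_
  rw [coeff_mul, Nat.sum_antidiagonal_eq_sum_range_succ_mk, mul_sum,
    Nat.succ_sub (Nat.lt_succ_iff.mp (mem_range.mp hk))]
  simp only [mul_assoc, Nat.sub_sub]

noncomputable def powerSumEgf (d : ℕ) (χ : ℤ → ℂ) (ξ : ℂ) (u m : ℕ) : ℂ⟦X⟧ :=
  mk fun k => T (u * d - 1) χ (ξ ^ m) k * (m : ℂ) ^ k / k.factorial

theorem S_eq_coeff (d : ℕ) (χ : ℤ → ℂ) (ξ : ℂ) (n u v w : ℕ) :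
    S d χ ξ n u v w = n.factorial * coeff n (powerSumEgf d χ ξ u (v * w) *
      (powerSumEgf d χ ξ v (u * w) * powerSumEgf d χ ξ w (u * v))) := by
  rw [coeff_mul_mul_eq_sum_range, mul_sum, S]
  refine sum_congr rfl fun k _ => ?_
  rw [mul_sum]
  refine sum_congr rfl fun l _ => ?_
  simp only [powerSumEgf, coeff_mk]
  push_cast
  field_simp
  ring

theorem S_swap_first_two (d : ℕ) (χ : ℤ → ℂ) (ξ : ℂ) (n u v w : ℕ) :
    S d χ ξ n u v w = S d χ ξ n v u w := by
  rw [S_eq_coeff, S_eq_coeff, mul_comm v u, mul_left_comm]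

theorem S_swap_last_two (d : ℕ) (χ : ℤ → ℂ) (ξ : ℂ) (n u v w : ℕ) :
    S d χ ξ n u v w = S d χ ξ n u w v := by
  rw [S_eq_coeff, S_eq_coeff, mul_comm w v, mul_comm (powerSumEgf d χ ξ w _)]

theorem invariant_comp_perm_of_invariant_comp_swap {n : ℕ} {α β : Type*}
    (g : (Fin (n + 1) → α) → β)
    (hg : ∀ (i : Fin n) (w : Fin (n + 1) → α), g (w ∘ Equiv.swap i.castSucc i.succ) = g w)
    (σ : Equiv.Perm (Fin (n + 1))) (w : Fin (n + 1) → α) : g (w ∘ σ) = g w := by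
  have hσ : σ ∈ Submonoid.closure (Set.range fun i : Fin n ↦ Equiv.swap i.castSucc i.succ) := by
    simp [Equiv.Perm.mclosure_swap_castSucc_succ]
  induction hσ using Submonoid.closure_induction generalizing w with
  | mem τ hτ => obtain ⟨i, rfl⟩ := hτ; exact hg i w
  | one => rfl
  | mul τ ρ _ _ hτ hρ => rw [Equiv.Perm.coe_mul, ← Function.comp_assoc, hρ, hτ]

theorem type_a3_symmetric_general (d : ℕ)
    (χ : ℤ → ℂ) (ξ : ℂ)
    (w : Fin 3 → ℕ)
    (n : ℕ) (σ : Equiv.Perm (Fin 3)) :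
    S d χ ξ n (w (σ 0)) (w (σ 1)) (w (σ 2)) = S d χ ξ n (w 0) (w 1) (w 2) := by
  refine invariant_comp_perm_of_invariant_comp_swap (fun w => S d χ ξ n (w 0) (w 1) (w 2)) ?_ σ w
  intro i w
  fin_cases i
  · exact (S_swap_first_two ..).symm
  · exact (S_swap_last_two ..).symm

/-- The expression (a-3) is totally symmetric in `(w₁, w₂, w₃)`. -/
theorem type_a3_symmetric (d : ℕ) (hd : Odd d) (hd0 : 0 < d)
    (χ : ℤ → ℂ) (hχ : Function.Periodic χ (d : ℤ)) (ξ : ℂ)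
    (w : Fin 3 → ℕ) (hw : ∀ i, 0 < w i) (hwodd : ∀ i, Odd (w i))
    (hξ : ∀ i j, i ≠ j → ξ ^ (d * w i * w j) + 1 ≠ 0)
    (n : ℕ) (σ : Equiv.Perm (Fin 3)) :
    S d χ ξ n (w (σ 0)) (w (σ 1)) (w (σ 2)) = S d χ ξ n (w 0) (w 1) (w 2) :=
  type_a3_symmetric_general d χ ξ w n σ
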